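/- If P is a Frobenius, height-(0,1) type-C poset, then the functional F_P = Σ_{-i ⪯ j, i < j} E*_{-i,j} + Σ_{-i ⪯ i} E*_{-i,i} is a Frobenius functional on g_C(P); that is, the Kirillov form B_{F_P}(x,y) = F_P([x,y]) is nondegenerate on g_C(P). -/

import Mathlib

/-- The underlying set `{-n,...,-1,1,...,n}` of a type-C poset, as a finset of integers. -/
noncomputable def Idx (n : ℕ) : Finset ℤ := (Finset.Icc (-(n : ℤ)) (n : ℤ)).erase 0

/-- The index type `{-n,...,-1,1,...,n}` for rows and columns of `2n × 2n` matrices. -/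
abbrev Iv (n : ℕ) := {i : ℤ // i ∈ Idx n}

/-- The matrix unit `E_{a,b}` with a `1` in entry `(a,b)` and `0` elsewhere, for rows and
columns indexed by `{-n,...,-1,1,...,n}`. -/
def EE (k : Type*) [Field k] (n : ℕ) (a b : ℤ) : Matrix (Iv n) (Iv n) k :=
  fun p q => if p.1 = a ∧ q.1 = b then 1 else 0

/-- A type-C poset: a poset on `{-n,...,-1,1,...,n}` such that `i ⪯ j` implies `i ≤ j`,
and for `i ≠ -j`, `i ⪯ j` iff `-j ⪯ -i`. -/
structure TypeCPoset (n : ℕ) where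
  le : ℤ → ℤ → Prop
  mem_of_le : ∀ i j, le i j → i ∈ Idx n ∧ j ∈ Idx n
  refl : ∀ i ∈ Idx n, le i i
  antisymm : ∀ i j, le i j → le j i → i = j
  trans : ∀ i j l, le i j → le j l → le i l
  le_int : ∀ i j, le i j → i ≤ j
  symm : ∀ i j, i ≠ -j → (le i j ↔ le (-j) (-i))

/-- The generating set (in fact a basis, together with spanning diagonal elements) of the
type-C Lie poset algebra determined by the order relation `le`, restricted to the pairs
`{-i, i}` with `i` in the set `S` of positive labels:
`{E_{-i,-i} - E_{i,i}} ∪ {E_{-i,-j} - E_{j,i} : -i ⪯ -j, j ⪯ i} ∪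
{E_{-i,j} + E_{-j,i} : -i ⪯ j, -j ⪯ i, i ≠ j} ∪ {E_{-i,i} : -i ⪯ i}`. -/
def gCgen (k : Type*) [Field k] (n : ℕ) (S : Set ℤ) (le : ℤ → ℤ → Prop) :
    Set (Matrix (Iv n) (Iv n) k) :=
  {M | (∃ i ∈ S, M = EE k n (-i) (-i) - EE k n i i) ∨
       (∃ i ∈ S, ∃ j ∈ S, le (-i) (-j) ∧ le j i ∧ M = EE k n (-i) (-j) - EE k n j i) ∨
       (∃ i ∈ S, ∃ j ∈ S, le (-i) j ∧ le (-j) i ∧ i ≠ j ∧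
          M = EE k n (-i) j + EE k n (-j) i) ∨
       (∃ i ∈ S, le (-i) i ∧ M = EE k n (-i) i)}

/-- The type-C Lie poset algebra `g_C(P)` (as a subspace of matrices, closed under the
commutator) determined by the order relation `le` and set `S` of positive labels. -/
noncomputable def gC (k : Type*) [Field k] (n : ℕ) (S : Set ℤ) (le : ℤ → ℤ → Prop) :
    Submodule k (Matrix (Iv n) (Iv n) k) :=
  Submodule.span k (gCgen k n S le)

/-- The kernel of the Kirillov form `B_F(x,y) = F (xy - yx)` on a subspace `W` of an
associative algebra `A` (with `W` closed under the commutator): the set of `x ∈ W` with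
`F (xy - yx) = 0` for all `y ∈ W`. -/
noncomputable def kerB {k A : Type*} [Field k] [Ring A] [Algebra k A]
    (W : Submodule k A) (F : A →ₗ[k] k) : Submodule k A :=
  W ⊓ ⨅ y ∈ W, LinearMap.ker (F ∘ₗ (LinearMap.mulRight k y - LinearMap.mulLeft k y))

/-- The index of a Lie algebra realized as a subspace `W` of an associative algebra,
closed under the commutator: the minimum over functionals `F` of the dimension of the
kernel of the Kirillov form `B_F`. -/
noncomputable def lieIndex {k A : Type*} [Field k] [Ring A] [Algebra k A]
    (W : Submodule k A) : ℕ :=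
  sInf {d : ℕ | ∃ F : A →ₗ[k] k, d = Module.finrank k (kerB W F)}

/-- The order relation `le` (on `{-n,...,-1,1,...,n}`) is of height `(0,1)`: the induced
poset on the positive elements is an antichain, every chain has at most two elements, and
some chain has exactly two elements. -/
def Height01 (le : ℤ → ℤ → Prop) : Prop :=
  (∀ i j : ℤ, 0 < i → 0 < j → le i j → i = j) ∧
  (∀ x y z : ℤ, le x y → le y z → x ≠ y → y ≠ z → False) ∧
  (∃ x y : ℤ, x ≠ y ∧ le x y)

/-- The adjacency relation of the relation graph `RG(P)`: vertices are the positive labels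
`i` (standing for the pairs `{-i, i}`), with `i` adjacent to `j` iff `-i ⪯ j`
(equivalently, by the type-C symmetry, `-j ⪯ i`); `-i ⪯ i` gives a self-loop at `i`. -/
def adjRG (le : ℤ → ℤ → Prop) (i j : ℤ) : Prop :=
  0 < i ∧ 0 < j ∧ (le (-i) j ∨ le (-j) i)

/-- The edge set of the relation graph `RG(P)`, as a set of unordered pairs. -/
def edgeRG (le : ℤ → ℤ → Prop) : Set (Sym2 ℤ) :=
  {e | ∃ i j, adjRG le i j ∧ e = s(i, j)}

/-- A closed walk of odd length in the graph with adjacency relation `adj`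
(self-loops give closed walks of length 1). -/
def OddClosedWalk {V : Type*} (adj : V → V → Prop) : Prop :=
  ∃ (m : ℕ) (w : ℕ → V), Odd m ∧ w m = w 0 ∧ ∀ i < m, adj (w i) (w (i + 1))

/-- The relation graph `RG(P)` is connected: any two vertices in `{1,...,n}` are joined by
a walk. -/
def ConnRG (n : ℕ) (le : ℤ → ℤ → Prop) : Prop :=
  ∀ i ∈ Finset.Icc (1 : ℤ) (n : ℤ), ∀ j ∈ Finset.Icc (1 : ℤ) (n : ℤ),
    Relation.ReflTransGen (adjRG le) i j

/-!
In height `(0,1)`, `g_C(P)` is the diagonal subalgebra `𝔥`, spanned by the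
`E_{-i,-i} - E_{i,i}`, plus the abelian ideal spanned by the vectors `X_{ab} = E_{-a,b} + E_{-b,a}`,
one for each edge `-a ⪯ b` of the relation graph; `𝔥` acts on them by the weights
`[h, X_{ab}] = (h_{-a,-a} + h_{-b,-b}) X_{ab}`. Since `g_C(P)` is Frobenius, these weights separate
the points of `𝔥` (a diagonal element killed by all of them is central, hence zero) and can be
prescribed independently (representing the functional `E*_{-a,b}` through a Frobenius form yields
a diagonal element whose weights are nonzero exactly on the edge `{a, b}`). As `F_P(X_{ab}) = 1`
for every edge, for `x` in the kernel of `B_{F_P}` pairing with the `X_{ab}` kills all weights of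
the diagonal of `x`, so the diagonal vanishes; pairing with a diagonal element that detects the
single edge `{a, b}` then kills the coefficient of `x` at `(-a, b)`.
-/

section KirillovForm

variable {k A : Type*} [Field k] [Ring A] [Algebra k A] {W : Submodule k A} {F : A →ₗ[k] k}

lemma mem_kerB {x : A} : x ∈ kerB W F ↔ x ∈ W ∧ ∀ y ∈ W, F (x * y - y * x) = 0 := by
  simp [kerB, Submodule.mem_iInf]

lemma kerB_eq_bot_iff :
    kerB W F = ⊥ ↔ ∀ x ∈ W, (∀ y ∈ W, F (x * y - y * x) = 0) → x = 0 := by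
  simp only [Submodule.eq_bot_iff, mem_kerB, and_imp]

lemma exists_kerB_eq_bot_of_lieIndex_eq_zero [FiniteDimensional k A] (h : lieIndex W = 0) :
    ∃ F : A →ₗ[k] k, kerB W F = ⊥ := by
  obtain ⟨F, hF⟩ : 0 ∈ {d : ℕ | ∃ F : A →ₗ[k] k, d = Module.finrank k (kerB W F)} :=
    h ▸ Nat.sInf_mem ⟨_, 0, rfl⟩
  exact ⟨F, Submodule.finrank_eq_zero.mp hF.symm⟩

lemma exists_mem_commutator_pairing_eq [FiniteDimensional k A] (hF : kerB W F = ⊥)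
    (φ : A →ₗ[k] k) : ∃ z ∈ W, ∀ y ∈ W, F (z * y - y * z) = φ y := by
  let β : W →ₗ[k] Module.Dual k W :=
    ((LinearMap.mul k A - (LinearMap.mul k A).flip).compr₂ F).domRestrict₁₂ W W
  have hβ : Function.Injective β := by
    rw [← LinearMap.ker_eq_bot, Submodule.eq_bot_iff]
    exact fun z hz => Subtype.ext <|
      kerB_eq_bot_iff.mp hF z z.2 fun y hy => LinearMap.congr_fun hz ⟨y, hy⟩
  obtain ⟨z, hz⟩ := (LinearMap.injective_iff_surjective_of_finrank_eq_finrank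
    Subspace.dual_finrank_eq.symm).mp hβ (φ.domRestrict W)
  exact ⟨z, z.2, fun y hy => LinearMap.congr_fun hz ⟨y, hy⟩⟩

end KirillovForm

section Labels

variable {n : ℕ}

lemma mem_Idx_iff {i : ℤ} : i ∈ Idx n ↔ i ≠ 0 ∧ -(n : ℤ) ≤ i ∧ i ≤ n := by
  simp [Idx]

lemma neg_mem_Idx {i : ℤ} (h : i ∈ Idx n) : -i ∈ Idx n := by
  rw [mem_Idx_iff] at h ⊢
  omega

instance : Neg (Iv n) := ⟨fun p => ⟨-p.1, neg_mem_Idx p.2⟩⟩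

@[simp] lemma Iv.coe_neg (p : Iv n) : ((-p : Iv n) : ℤ) = -(p : ℤ) := rfl

noncomputable def entry {k : Type*} [Zero k] (x : Matrix (Iv n) (Iv n) k) (a b : ℤ) : k :=
  if h : a ∈ Idx n ∧ b ∈ Idx n then x ⟨a, h.1⟩ ⟨b, h.2⟩ else 0

@[simp] lemma entry_coe {k : Type*} [Zero k] (x : Matrix (Iv n) (Iv n) k) (p q : Iv n) :
    entry x p q = x p q :=
  dif_pos ⟨p.2, q.2⟩

lemma TypeCPoset.le_neg_comm (P : TypeCPoset n) {a b : ℤ} (h : P.le (-a) b) : P.le (-b) a := by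
  by_cases hab : a = b
  · exact hab ▸ h
  · simpa using (P.symm (-a) b (by omega)).mp h

end Labels

namespace Height01

variable {n : ℕ} {P : TypeCPoset n}

lemma eq_of_le_of_pos (h01 : Height01 P.le) {i j : ℤ} (hi : 0 < i) (h : P.le i j) : i = j :=
  h01.1 i j hi (hi.trans_le (P.le_int i j h)) h

lemma eq_of_le_of_neg (h01 : Height01 P.le) {i j : ℤ} (hj : j < 0) (h : P.le i j) : i = j := by
  have hij := P.le_int i j h
  have := h01.1 (-j) (-i) (by omega) (by omega) ((P.symm i j (by omega)).mp h)
  omega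

lemma neg_pos_of_le (h01 : Height01 P.le) {i j : ℤ} (h : P.le i j) (hne : i ≠ j) :
    i < 0 ∧ 0 < j := by
  have hi := mem_Idx_iff.mp (P.mem_of_le i j h).1
  have hj := mem_Idx_iff.mp (P.mem_of_le i j h).2
  exact ⟨by_contra fun _ => hne (h01.eq_of_le_of_pos (by omega) h),
    by_contra fun _ => hne (h01.eq_of_le_of_neg (by omega) h)⟩

end Height01

section Generators

variable (k : Type*) [Field k] (n : ℕ)

/-- The basis vector `E_{-a,b} + E_{-b,a}` of `g_C(P)` attached to the edge `{a, b}` of `RG(P)`;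
for a loop it is `E_{-a,a}`, not `2 E_{-a,a}`. -/
def rootVec (a b : ℤ) : Matrix (Iv n) (Iv n) k :=
  if a = b then EE k n (-a) a else EE k n (-a) b + EE k n (-b) a

noncomputable def cartanElt (c : ℤ → k) : Matrix (Iv n) (Iv n) k :=
  ∑ i ∈ Finset.Icc (1 : ℤ) n, c i • (EE k n (-i) (-i) - EE k n i i)

def cartanWeight (c : ℤ → k) (p : Iv n) : k :=
  if (p : ℤ) < 0 then c (-p) else -c p

variable {k n}

lemma cartanElt_eq_diagonal (c : ℤ → k) :
    cartanElt k n c = Matrix.diagonal (cartanWeight k n c) := by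
  ext p q
  have hp := mem_Idx_iff.mp p.2
  by_cases hpq : p = q
  · subst hpq
    simp only [cartanElt, Matrix.sum_apply, Matrix.smul_apply, Matrix.sub_apply, EE,
      Matrix.diagonal_apply_eq, cartanWeight, and_self, smul_eq_mul, mul_sub, mul_ite, mul_one,
      mul_zero, Finset.sum_sub_distrib, ← neg_eq_iff_eq_neg, Finset.sum_ite_eq, Finset.mem_Icc]
    split_ifs <;> first | (exfalso; omega) | simp
  · have hne : (p : ℤ) ≠ q := fun h => hpq (Subtype.ext h)
    simp only [cartanElt, Matrix.sum_apply, Matrix.smul_apply, Matrix.sub_apply, EE,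
      Matrix.diagonal_apply_ne _ hpq]
    refine Finset.sum_eq_zero fun i _ => ?_
    rw [if_neg (by omega), if_neg (by omega), sub_self, smul_zero]

lemma cartanElt_mem_gC (le : ℤ → ℤ → Prop) (c : ℤ → k) :
    cartanElt k n c ∈ gC k n (Set.Icc (1 : ℤ) n) le :=
  Submodule.sum_mem _ fun i hi => Submodule.smul_mem _ _
    (Submodule.subset_span (Or.inl ⟨i, Set.mem_Icc.mpr (Finset.mem_Icc.mp hi), rfl⟩))

lemma rootVec_mem_gC {P : TypeCPoset n} {a b : ℤ} (ha : 0 < a) (hb : 0 < b) (h : P.le (-a) b) :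
    rootVec k n a b ∈ gC k n (Set.Icc (1 : ℤ) n) P.le := by
  have ha' := mem_Idx_iff.mp (P.mem_of_le _ _ h).1
  have hb' := mem_Idx_iff.mp (P.mem_of_le _ _ h).2
  unfold rootVec
  split_ifs with hab
  · subst hab
    exact Submodule.subset_span (Or.inr (Or.inr (Or.inr ⟨a, ⟨by omega, by omega⟩, h, rfl⟩)))
  · exact Submodule.subset_span (Or.inr (Or.inr (Or.inl
      ⟨a, ⟨by omega, by omega⟩, b, ⟨by omega, by omega⟩, h, P.le_neg_comm h, hab, rfl⟩)))

lemma EE_apply_eq_zero_of_not_le {le : ℤ → ℤ → Prop} {a b : ℤ} (hab : le a b) {p q : Iv n}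
    (h : ¬ le p q) : EE k n a b p q = 0 :=
  if_neg (by rintro ⟨rfl, rfl⟩; exact h hab)

lemma mul_EE_apply (x : Matrix (Iv n) (Iv n) k) (a b : ℤ) (p q : Iv n) :
    (x * EE k n a b) p q = if (q : ℤ) = b then entry x p a else 0 := by
  rw [Matrix.mul_apply]
  by_cases ha : a ∈ Idx n
  · rw [Fintype.sum_eq_single ⟨a, ha⟩ fun r hr => by
      simp [EE, show (r : ℤ) ≠ a from fun h => hr (Subtype.ext h)]]
    simp [EE, entry, ha]
  · have hE (r : Iv n) : EE k n a b r q = 0 :=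
      if_neg fun h : (r : ℤ) = a ∧ (q : ℤ) = b => ha (h.1 ▸ r.2)
    simp [hE, entry, ha]

lemma EE_mul_apply (x : Matrix (Iv n) (Iv n) k) (a b : ℤ) (p q : Iv n) :
    (EE k n a b * x) p q = if (p : ℤ) = a then entry x b q else 0 := by
  rw [Matrix.mul_apply]
  by_cases hb : b ∈ Idx n
  · rw [Fintype.sum_eq_single ⟨b, hb⟩ fun r hr => by
      simp [EE, show (r : ℤ) ≠ b from fun h => hr (Subtype.ext h)]]
    simp [EE, entry, hb]
  · have hE (r : Iv n) : EE k n a b p r = 0 :=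
      if_neg fun h : (p : ℤ) = a ∧ (r : ℤ) = b => hb (h.2 ▸ r.2)
    simp [hE, entry, hb]

lemma commutator_cartanElt_apply (x : Matrix (Iv n) (Iv n) k) (c : ℤ → k) (p q : Iv n) :
    (x * cartanElt k n c - cartanElt k n c * x) p q =
      x p q * (cartanWeight k n c q - cartanWeight k n c p) := by
  rw [cartanElt_eq_diagonal, Matrix.sub_apply, Matrix.mul_diagonal, Matrix.diagonal_mul]
  ring

end Generators

structure TypeCShape {k : Type*} [Field k] {n : ℕ} (le : ℤ → ℤ → Prop)
    (x : Matrix (Iv n) (Iv n) k) : Prop where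
  eq_zero_of_not_le : ∀ p q : Iv n, ¬ le p q → x p q = 0
  diag_eq : ∀ p : Iv n, 0 < (p : ℤ) → x p p = -x (-p) (-p)
  symm : ∀ p q : Iv n, (p : ℤ) < 0 → 0 < (q : ℤ) → x p q = x (-q) (-p)

namespace TypeCShape

variable {k : Type*} [Field k] {n : ℕ} {P : TypeCPoset n} {x : Matrix (Iv n) (Iv n) k}

lemma EE_sub_EE {i j : ℤ} (hi : 0 < i) (hj : 0 < j) (h₁ : P.le (-i) (-j)) (h₂ : P.le j i) :
    TypeCShape P.le (EE k n (-i) (-j) - EE k n j i) := by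
  refine ⟨fun p q h => ?_, fun p hp => ?_, fun p q hp hq => ?_⟩
  · rw [Matrix.sub_apply, EE_apply_eq_zero_of_not_le h₁ h, EE_apply_eq_zero_of_not_le h₂ h,
      sub_zero]
  all_goals
    simp only [Matrix.sub_apply, EE, Iv.coe_neg]
    split_ifs <;> first | (exfalso; omega) | simp

lemma of_rootVec {a b : ℤ} (ha : 0 < a) (hb : 0 < b) (h : P.le (-a) b) :
    TypeCShape P.le (rootVec k n a b) := by
  have h' := P.le_neg_comm h
  unfold rootVec
  split_ifs with hab
  · refine ⟨fun p q hpq => EE_apply_eq_zero_of_not_le (hab ▸ h) hpq, fun p hp => ?_,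
      fun p q hp hq => ?_⟩
    all_goals
      simp only [EE, Iv.coe_neg]
      split_ifs <;> first | (exfalso; omega) | simp
  · refine ⟨fun p q hpq => ?_, fun p hp => ?_, fun p q hp hq => ?_⟩
    · rw [Matrix.add_apply, EE_apply_eq_zero_of_not_le h hpq, EE_apply_eq_zero_of_not_le h' hpq,
        add_zero]
    all_goals
      simp only [Matrix.add_apply, EE, Iv.coe_neg]
      split_ifs <;> first | (exfalso; omega) | simp

lemma of_mem_gC (hx : x ∈ gC k n (Set.Icc (1 : ℤ) n) P.le) : TypeCShape P.le x := by
  induction hx using Submodule.span_induction with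
  | mem M hM =>
    rcases hM with ⟨i, ⟨hi, hin⟩, rfl⟩ | ⟨i, ⟨hi, -⟩, j, ⟨hj, -⟩, h₁, h₂, rfl⟩ |
      ⟨a, ⟨ha, -⟩, b, ⟨hb, -⟩, h, -, hab, rfl⟩ | ⟨a, ⟨ha, -⟩, h, rfl⟩
    · exact EE_sub_EE (by omega) (by omega) (P.refl _ (mem_Idx_iff.mpr (by omega)))
        (P.refl _ (mem_Idx_iff.mpr (by omega)))
    · exact EE_sub_EE (by omega) (by omega) h₁ h₂
    · simpa [rootVec, hab] using of_rootVec (k := k) (by omega) (by omega) h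
    · simpa [rootVec] using of_rootVec (k := k) (by omega) (by omega) h
  | zero => exact ⟨by simp, by simp, by simp⟩
  | add x y _ _ hx hy =>
    refine ⟨fun p q h => ?_, fun p hp => ?_, fun p q hp hq => ?_⟩
    · simp [hx.eq_zero_of_not_le p q h, hy.eq_zero_of_not_le p q h]
    · simp [hx.diag_eq p hp, hy.diag_eq p hp, add_comm]
    · simp [hx.symm p q hp hq, hy.symm p q hp hq]
  | smul c x _ hx =>
    refine ⟨fun p q h => ?_, fun p hp => ?_, fun p q hp hq => ?_⟩
    · simp [hx.eq_zero_of_not_le p q h]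
    · simp [hx.diag_eq p hp]
    · simp [hx.symm p q hp hq]

lemma entry_eq_zero_of_not_le {le : ℤ → ℤ → Prop} (hx : TypeCShape le x) {a b : ℤ}
    (h : ¬ le a b) : entry x a b = 0 := by
  unfold entry
  split_ifs
  · exact hx.eq_zero_of_not_le _ _ h
  · rfl

lemma entry_pos_diag {le : ℤ → ℤ → Prop} (hx : TypeCShape le x) {b : ℤ} (hb : 0 < b) :
    entry x b b = -entry x (-b) (-b) := by
  by_cases hmem : b ∈ Idx n
  · have h := hx.diag_eq ⟨b, hmem⟩ hb
    rwa [← entry_coe x, ← entry_coe x (-_)] at h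
  · have : -b ∉ Idx n := fun h => hmem (by simpa using neg_mem_Idx h)
    simp [entry, hmem, this]

lemma entry_col_neg (h01 : Height01 P.le) (hx : TypeCShape P.le x) {a : ℤ} (ha : 0 < a)
    (p : Iv n) : entry x p (-a) = if (p : ℤ) = -a then entry x (-a) (-a) else 0 := by
  split_ifs with h
  · rw [h]
  · exact hx.entry_eq_zero_of_not_le fun hle => h (h01.eq_of_le_of_neg (by omega) hle)

lemma entry_row_pos (h01 : Height01 P.le) (hx : TypeCShape P.le x) {b : ℤ} (hb : 0 < b)
    (q : Iv n) : entry x b q = if (q : ℤ) = b then entry x b b else 0 := by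
  split_ifs with h
  · rw [h]
  · exact hx.entry_eq_zero_of_not_le fun hle => h (h01.eq_of_le_of_pos hb hle).symm

lemma commutator_EE (h01 : Height01 P.le) (hx : TypeCShape P.le x) {a b : ℤ} (ha : 0 < a)
    (hb : 0 < b) :
    x * EE k n (-a) b - EE k n (-a) b * x =
      (entry x (-a) (-a) + entry x (-b) (-b)) • EE k n (-a) b := by
  ext p q
  rw [Matrix.sub_apply, mul_EE_apply, EE_mul_apply, hx.entry_col_neg h01 ha,
    hx.entry_row_pos h01 hb, hx.entry_pos_diag hb, Matrix.smul_apply, EE, smul_eq_mul]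
  by_cases hp : (p : ℤ) = -a <;> by_cases hq : (q : ℤ) = b <;> simp [hp, hq]

lemma commutator_rootVec (h01 : Height01 P.le) (hx : TypeCShape P.le x) {a b : ℤ} (ha : 0 < a)
    (hb : 0 < b) :
    x * rootVec k n a b - rootVec k n a b * x =
      (entry x (-a) (-a) + entry x (-b) (-b)) • rootVec k n a b := by
  unfold rootVec
  split_ifs with hab
  · subst hab
    exact hx.commutator_EE h01 ha ha
  · rw [mul_add, add_mul, add_sub_add_comm, hx.commutator_EE h01 ha hb,
      hx.commutator_EE h01 hb ha, add_comm (entry x (-b) (-b)), smul_add]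

lemma eq_zero (h01 : Height01 P.le) (hx : TypeCShape P.le x)
    (hdiag : ∀ p : Iv n, p.1 < 0 → x p p = 0)
    (hoff : ∀ p q : Iv n, p.1 < 0 → 0 < q.1 → -p.1 ≤ q.1 → P.le p.1 q.1 → x p q = 0) :
    x = 0 := by
  ext p q
  rw [Matrix.zero_apply]
  by_cases hle : P.le p q
  · by_cases hpq : p = q
    · subst hpq
      rcases lt_or_gt_of_ne (mem_Idx_iff.mp p.2).1 with hp | hp
      · exact hdiag p hp
      · rw [hx.diag_eq p hp, hdiag (-p) (by simpa using hp), neg_zero]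
    obtain ⟨hp, hq⟩ := h01.neg_pos_of_le hle fun h => hpq (Subtype.ext h)
    by_cases hpq' : -p.1 ≤ q.1
    · exact hoff p q hp hq hpq' hle
    · rw [hx.symm p q hp hq]
      refine hoff (-q) (-p) (by simpa using hq) (by simpa using hp) (by simp; omega) ?_
      simpa using (P.symm p q (by omega)).mp hle
  · exact hx.eq_zero_of_not_le p q hle

end TypeCShape

section FunctionalFP

variable {k : Type*} [Field k] {n : ℕ} {P : TypeCPoset n} [DecidableRel P.le]
  {F : Matrix (Iv n) (Iv n) k →ₗ[k] k}

lemma apply_EE (hF : ∀ M, F M = ∑ p : Iv n, ∑ q : Iv n,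
      if p.1 < 0 ∧ 0 < q.1 ∧ -p.1 ≤ q.1 ∧ P.le p.1 q.1 then M p q else 0)
    {a b : ℤ} (ha : a ∈ Idx n) (hb : b ∈ Idx n) :
    F (EE k n a b) = if a < 0 ∧ 0 < b ∧ -a ≤ b ∧ P.le a b then 1 else 0 := by
  rw [hF, ← Fintype.sum_prod_type', Fintype.sum_eq_single ((⟨a, ha⟩, ⟨b, hb⟩) : Iv n × Iv n)]
  · simp [EE]
  · rintro ⟨p, q⟩ hpq
    have : ¬((p : ℤ) = a ∧ (q : ℤ) = b) := fun h => hpq (by ext <;> simp [h.1, h.2])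
    simp [EE, this]

lemma apply_rootVec (hF : ∀ M, F M = ∑ p : Iv n, ∑ q : Iv n,
      if p.1 < 0 ∧ 0 < q.1 ∧ -p.1 ≤ q.1 ∧ P.le p.1 q.1 then M p q else 0)
    {a b : ℤ} (ha : 0 < a) (hb : 0 < b) (h : P.le (-a) b) : F (rootVec k n a b) = 1 := by
  have h' := P.le_neg_comm h
  have ha' : a ∈ Idx n := by simpa using neg_mem_Idx (P.mem_of_le _ _ h).1
  have hb' : b ∈ Idx n := (P.mem_of_le _ _ h).2
  unfold rootVec
  split_ifs with hab
  · subst hab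
    rw [apply_EE hF (neg_mem_Idx ha') ha', if_pos ⟨by omega, ha, by omega, h⟩]
  · rw [map_add, apply_EE hF (neg_mem_Idx ha') hb', apply_EE hF (neg_mem_Idx hb') ha']
    rcases lt_or_gt_of_ne hab with hlt | hlt
    · rw [if_pos ⟨by omega, hb, by omega, h⟩, if_neg fun _ => by omega, add_zero]
    · rw [if_neg fun _ => by omega, if_pos ⟨by omega, ha, by omega, h'⟩, zero_add]

lemma apply_commutator_cartanElt (hF : ∀ M, F M = ∑ p : Iv n, ∑ q : Iv n,
      if p.1 < 0 ∧ 0 < q.1 ∧ -p.1 ≤ q.1 ∧ P.le p.1 q.1 then M p q else 0)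
    (x : Matrix (Iv n) (Iv n) k) (d : ℤ → k) {p₀ q₀ : Iv n}
    (h₀ : p₀.1 < 0 ∧ 0 < q₀.1 ∧ -p₀.1 ≤ q₀.1 ∧ P.le p₀.1 q₀.1)
    (hd : ∀ a b, 0 < a → a ≤ b → P.le (-a) b → ¬(a = -p₀.1 ∧ b = q₀.1) → d a + d b = 0) :
    F (x * cartanElt k n d - cartanElt k n d * x) = -(x p₀ q₀ * (d (-p₀.1) + d q₀.1)) := by
  have weight_sub (p q : Iv n) (hp : p.1 < 0) (hq : 0 < q.1) :
      cartanWeight k n d q - cartanWeight k n d p = -(d (-p.1) + d q.1) := by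
    simp only [cartanWeight, if_pos hp, if_neg (not_lt.mpr hq.le)]
    ring
  rw [hF, ← Fintype.sum_prod_type', Fintype.sum_eq_single (p₀, q₀)]
  · rw [if_pos h₀, commutator_cartanElt_apply, weight_sub _ _ h₀.1 h₀.2.1]
    exact mul_neg _ _
  · rintro ⟨p, q⟩ hpq
    split_ifs with h
    · have hne : ¬(-p.1 = -p₀.1 ∧ q.1 = q₀.1) := fun e =>
        hpq (Prod.ext (Subtype.ext (neg_inj.mp e.1)) (Subtype.ext e.2))
      rw [commutator_cartanElt_apply, weight_sub _ _ h.1 h.2.1,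
        hd _ _ (by omega) h.2.2.1 (by simpa using h.2.2.2) hne, neg_zero, mul_zero]
    · rfl

end FunctionalFP

section FrobeniusWeights

variable {k : Type*} [Field k] {n : ℕ} {P : TypeCPoset n} {F : Matrix (Iv n) (Iv n) k →ₗ[k] k}

lemma cartanElt_commute (h01 : Height01 P.le) {c : ℤ → k}
    (hc : ∀ a b, 0 < a → 0 < b → P.le (-a) b → c a + c b = 0) {y : Matrix (Iv n) (Iv n) k}
    (hy : y ∈ gC k n (Set.Icc (1 : ℤ) n) P.le) : cartanElt k n c * y = y * cartanElt k n c := by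
  have hy := TypeCShape.of_mem_gC hy
  rw [cartanElt_eq_diagonal]
  ext p q
  rw [Matrix.diagonal_mul, Matrix.mul_diagonal]
  by_cases hle : P.le p q
  · by_cases hpq : p = q
    · rw [hpq, mul_comm]
    obtain ⟨hp, hq⟩ := h01.neg_pos_of_le hle fun h => hpq (Subtype.ext h)
    simp only [cartanWeight, if_pos hp, if_neg (not_lt.mpr hq.le)]
    linear_combination y p q * hc (-p) q (by omega) hq (by simpa using hle)
  · rw [hy.eq_zero_of_not_le p q hle, mul_zero, zero_mul]

lemma eq_zero_of_cartan_weights_eq_zero (h01 : Height01 P.le)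
    (hF : kerB (gC k n (Set.Icc (1 : ℤ) n) P.le) F = ⊥) {c : ℤ → k}
    (hc : ∀ a b, 0 < a → 0 < b → P.le (-a) b → c a + c b = 0) (p : Iv n) (hp : p.1 < 0) :
    c (-p.1) = 0 := by
  have hz : cartanElt k n c = 0 :=
    kerB_eq_bot_iff.mp hF _ (cartanElt_mem_gC _ c) fun y hy => by
      rw [cartanElt_commute h01 hc hy, sub_self, map_zero]
  simpa [cartanElt_eq_diagonal, cartanWeight, hp] using congrFun (congrFun hz p) p

lemma exists_cartan_weights_eq_single (h01 : Height01 P.le)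
    (hF : kerB (gC k n (Set.Icc (1 : ℤ) n) P.le) F = ⊥) {a₀ b₀ : ℤ} (hab₀ : a₀ ≤ b₀)
    (h₀ : P.le (-a₀) b₀) :
    ∃ d : ℤ → k, ∀ a b, 0 < a → a ≤ b → P.le (-a) b →
      (d a + d b) * F (rootVec k n a b) = if a = a₀ ∧ b = b₀ then 1 else 0 := by
  obtain ⟨z, hz, hzF⟩ := exists_mem_commutator_pairing_eq hF
    (Matrix.entryLinearMap k k (⟨-a₀, (P.mem_of_le _ _ h₀).1⟩ : Iv n)
      ⟨b₀, (P.mem_of_le _ _ h₀).2⟩)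
  refine ⟨fun i => entry z (-i) (-i), fun a b ha hab h => ?_⟩
  rw [← smul_eq_mul, ← map_smul,
    ← (TypeCShape.of_mem_gC hz).commutator_rootVec h01 ha (by omega),
    hzF _ (rootVec_mem_gC ha (by omega) h)]
  simp only [Matrix.entryLinearMap_apply, rootVec]
  split_ifs <;> simp only [Matrix.add_apply, EE] <;> split_ifs <;>
    first | rfl | (exfalso; omega) | norm_num

lemma exists_cartan_weights_ne_zero_only_at (h01 : Height01 P.le)
    (hF : kerB (gC k n (Set.Icc (1 : ℤ) n) P.le) F = ⊥) {a₀ b₀ : ℤ} (ha₀ : 0 < a₀)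
    (hab₀ : a₀ ≤ b₀) (h₀ : P.le (-a₀) b₀) :
    ∃ d : ℤ → k, d a₀ + d b₀ ≠ 0 ∧ ∀ a b, 0 < a → a ≤ b → P.le (-a) b →
      ¬(a = a₀ ∧ b = b₀) → d a + d b = 0 := by
  obtain ⟨d, hd⟩ := exists_cartan_weights_eq_single h01 hF hab₀ h₀
  refine ⟨d, fun h => by simpa [h] using hd a₀ b₀ ha₀ hab₀ h₀, fun a b ha hab h hne => ?_⟩
  have hFne : F (rootVec k n a b) ≠ 0 := fun h0 => by
    obtain ⟨d', hd'⟩ := exists_cartan_weights_eq_single h01 hF hab h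
    simpa [h0] using hd' a b ha hab h
  simpa [hne, hFne] using hd a b ha hab h

end FrobeniusWeights

/-- If `P` is a Frobenius, height-`(0,1)` type-C poset, then the functional
`F_P = Σ_{-i ⪯ j, i < j} E*_{-i,j} + Σ_{-i ⪯ i} E*_{-i,i}` (which returns the sum of the
entries of a matrix in the positions `(a, b)` with `a < 0 < b`, `a ⪯ b` and `-a ≤ b`) is a
Frobenius functional on `g_C(P)`: the Kirillov form `B_{F_P}(x,y) = F_P (xy - yx)` is
nondegenerate on `g_C(P)`. -/
theorem stmt14 (k : Type*) [Field k] (n : ℕ) (P : TypeCPoset n)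
    [DecidableRel P.le] (h01 : Height01 P.le)
    (hFrob : lieIndex (gC k n (Set.Icc (1 : ℤ) (n : ℤ)) P.le) = 0)
    (F : Matrix (Iv n) (Iv n) k →ₗ[k] k)
    (hF : ∀ M, F M = ∑ p : Iv n, ∑ q : Iv n,
      if p.1 < 0 ∧ 0 < q.1 ∧ -p.1 ≤ q.1 ∧ P.le p.1 q.1 then M p q else 0) :
    ∀ x ∈ gC k n (Set.Icc (1 : ℤ) (n : ℤ)) P.le,
      (∀ y ∈ gC k n (Set.Icc (1 : ℤ) (n : ℤ)) P.le, F (x * y - y * x) = 0) → x = 0 := by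
  intro x hx hxF
  obtain ⟨F', hF'⟩ := exists_kerB_eq_bot_of_lieIndex_eq_zero hFrob
  have hxS := TypeCShape.of_mem_gC hx
  have hweights : ∀ a b, 0 < a → 0 < b → P.le (-a) b →
      entry x (-a) (-a) + entry x (-b) (-b) = 0 := fun a b ha hb h => by
    simpa [hxS.commutator_rootVec h01 ha hb, apply_rootVec hF ha hb h] using
      hxF _ (rootVec_mem_gC ha hb h)
  have hdiag (p : Iv n) (hp : p.1 < 0) : x p p = 0 := by
    simpa using eq_zero_of_cartan_weights_eq_zero h01 hF' hweights p hp
  refine hxS.eq_zero h01 hdiag fun p q hp hq hpq hle => ?_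
  obtain ⟨d, hd₀, hd⟩ := exists_cartan_weights_ne_zero_only_at h01 hF' (a₀ := -p.1) (by omega)
    hpq (by simpa using hle)
  have := hxF _ (cartanElt_mem_gC P.le d)
  rw [apply_commutator_cartanElt hF x d ⟨hp, hq, hpq, hle⟩ hd] at this
  simpa [hd₀] using this
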